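/- Let F be a field and n ≥ 3. There is a constant C_n, depending only on n, with the following property: if 𝔏 is a finite collection of L lines in F^n and K is a subset of the set of joints of 𝔏, then K can be partitioned into at most L pairwise disjoint sets, each of cardinality at most C_n · |K|^{1/n}. -/

import Mathlib

/-- A line in `F^n`: a set of the form `{v + t • b : t ∈ F}` with `b ≠ 0`. -/
def IsLine (F : Type*) [Field F] {n : ℕ} (l : Set (Fin n → F)) : Prop :=
  ∃ v b : Fin n → F, b ≠ 0 ∧ l = {x | ∃ t : F, x = v + t • b}

/-- `b` is a direction of the line `l`. -/
def IsDirection (F : Type*) [Field F] {n : ℕ} (b : Fin n → F) (l : Set (Fin n → F)) : Prop :=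
  b ≠ 0 ∧ ∃ v : Fin n → F, l = {x | ∃ t : F, x = v + t • b}

/-- The lines `l 0, …, l (n-1)` form a joint at `x`: each passes through `x` and
their directions span `F^n`. -/
def FormsJoint (F : Type*) [Field F] {n : ℕ} (l : Fin n → Set (Fin n → F))
    (x : Fin n → F) : Prop :=
  (∀ i, x ∈ l i) ∧ ∃ b : Fin n → Fin n → F,
    (∀ i, IsDirection F (b i) (l i)) ∧ Submodule.span F (Set.range b) = ⊤

/-- `x` is a joint of the collection `𝔏`: there are (at least) `n` distinct lines of `𝔏`
through `x` whose directions span `F^n`. -/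
def IsJoint (F : Type*) [Field F] {n : ℕ} (𝔏 : Set (Set (Fin n → F)))
    (x : Fin n → F) : Prop :=
  ∃ l : Fin n → Set (Fin n → F), Function.Injective l ∧ (∀ i, l i ∈ 𝔏) ∧ FormsJoint F l x

/-- The multiplicity `N(x)`: the number of `n`-tuples of lines of `𝔏` forming a joint at `x`. -/
noncomputable def jointMult (F : Type*) [Field F] {n : ℕ} (𝔏 : Set (Set (Fin n → F)))
    (x : Fin n → F) : ℕ :=
  Set.ncard {l : Fin n → Set (Fin n → F) | (∀ i, l i ∈ 𝔏) ∧ FormsJoint F l x}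

/-- `𝔏` is generic: whenever `n` distinct lines of `𝔏` pass through a common point,
they form a joint there. -/
def Generic (F : Type*) [Field F] {n : ℕ} (𝔏 : Set (Set (Fin n → F))) : Prop :=
  ∀ (l : Fin n → Set (Fin n → F)) (x : Fin n → F), Function.Injective l →
    (∀ i, l i ∈ 𝔏) → (∀ i, x ∈ l i) → FormsJoint F l x

/-!
Polynomial method. Suppose `|K| < (m + 1)^n` and every line of `𝔏` contains more than `n m`
points of `K`. Over the algebraic closure of `F` there is a nonzero polynomial of degree
`≤ n m` vanishing on `K`; take one of minimal degree. Restricted to a line of `𝔏` it has more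
roots than its degree, so it vanishes on the line and its derivative along the line vanishes at
each point of `K`. At a joint these `n` directions span, so the whole gradient vanishes on `K`,
and by minimality every partial derivative is zero. In characteristic zero the polynomial is then
constant; in characteristic `p` it is the `p`-th power of a polynomial of smaller degree (the
field is perfect), again vanishing on `K`. Both contradict the choice, so some line of `𝔏`
carries at most `n m` points of `K`. Removing it together with these points and recursing
partitions `K` into at most `|𝔏|` parts of size `≤ n m`; with `m = ⌊|K|^{1/n}⌋` this gives
`C_n = n`.
-/

namespace MvPolynomial

variable {σ R : Type*}

theorem exists_expand_eq_of_dvd [CommSemiring R] {q : ℕ} {p : MvPolynomial σ R}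
    (h : ∀ α ∈ p.support, ∀ i, q ∣ α i) : ∃ g, expand q g = p := by
  refine ⟨∑ α ∈ p.support, monomial (α.mapRange (· / q) (Nat.zero_div q)) (coeff α p), ?_⟩
  conv_rhs => rw [← support_sum_monomial_coeff p]
  rw [map_sum]
  refine Finset.sum_congr rfl fun α hα => ?_
  rw [expand_monomial]
  congr 2
  ext i
  simp [Nat.mul_div_cancel' (h α hα i)]

section CommRing

variable [CommRing R]

theorem derivative_aeval [Fintype σ] (γ : σ → Polynomial R) (p : MvPolynomial σ R) :
    Polynomial.derivative (aeval γ p) =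
      ∑ i, aeval γ (pderiv i p) * Polynomial.derivative (γ i) := by
  classical
  induction p using MvPolynomial.induction_on with
  | C a => simp
  | add p q hp hq => simp [hp, hq, add_mul, Finset.sum_add_distrib]
  | mul_X p i hp =>
    simp [hp, pderiv_X, Pi.single_apply, apply_ite, add_mul, Finset.sum_add_distrib,
      Finset.sum_mul, mul_right_comm, mul_comm (γ i), add_comm]

theorem natDegree_aeval_le_totalDegree {γ : σ → Polynomial R} (hγ : ∀ i, (γ i).natDegree ≤ 1)
    (p : MvPolynomial σ R) : (aeval γ p).natDegree ≤ p.totalDegree := by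
  classical
  conv_lhs => rw [← support_sum_monomial_coeff p]
  rw [map_sum]
  refine Polynomial.natDegree_sum_le_of_forall_le _ _ fun s hs => ?_
  rw [aeval_monomial, ← Polynomial.C_eq_algebraMap]
  refine (Polynomial.natDegree_C_mul_le _ _).trans ((Polynomial.natDegree_prod_le _ _).trans ?_)
  refine le_trans (Finset.sum_le_sum fun i _ => ?_) (le_totalDegree hs)
  simpa using Polynomial.natDegree_pow_le_of_le (s i) (hγ i)

noncomputable def restrictLine (x b : σ → R) : MvPolynomial σ R →ₐ[R] Polynomial R :=
  aeval fun i => Polynomial.C (b i) * Polynomial.X + Polynomial.C (x i)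

theorem eval_restrictLine (x b : σ → R) (p : MvPolynomial σ R) (t : R) :
    (restrictLine x b p).eval t = eval (x + t • b) p := by
  have hline : (fun i => Polynomial.aeval t (Polynomial.C (b i) * Polynomial.X +
      Polynomial.C (x i))) = x + t • b := by
    funext i
    simp only [map_add, map_mul, Polynomial.aeval_C, Polynomial.aeval_X]
    simp [add_comm, mul_comm]
  rw [restrictLine, ← Polynomial.coe_aeval_eq_eval, comp_aeval_apply, hline]
  rfl

theorem natDegree_restrictLine_le (x b : σ → R) (p : MvPolynomial σ R) :
    (restrictLine x b p).natDegree ≤ p.totalDegree :=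
  natDegree_aeval_le_totalDegree (fun _ => Polynomial.natDegree_linear_le) p

theorem eval_zero_derivative_restrictLine [Fintype σ] (x b : σ → R) (p : MvPolynomial σ R) :
    (Polynomial.derivative (restrictLine x b p)).eval 0 = b ⬝ᵥ fun i => eval x (pderiv i p) := by
  rw [restrictLine, derivative_aeval, Polynomial.eval_finsetSum, dotProduct]
  refine Finset.sum_congr rfl fun i _ => ?_
  rw [Polynomial.eval_mul, ← restrictLine, eval_restrictLine]
  simpa using mul_comm _ _

theorem totalDegree_pderiv_lt {i : σ} {p : MvPolynomial σ R} (h : pderiv i p ≠ 0) :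
    (pderiv i p).totalDegree < p.totalDegree := by
  classical
  obtain ⟨α, hα, hdeg⟩ := Finset.exists_mem_eq_sup _ (support_nonempty.2 h)
    fun s : σ →₀ ℕ => s.sum fun _ e => e
  have hmem : α + Finsupp.single i 1 ∈ p.support := by
    rw [mem_support_iff, coeff_pderiv] at hα
    exact mem_support_iff.2 (left_ne_zero_of_mul hα)
  have := le_totalDegree hmem
  rw [Finsupp.sum_add_index' (fun _ => rfl) fun _ _ _ => rfl, Finsupp.sum_single_index rfl] at this
  rw [totalDegree, hdeg]
  omega

theorem dvd_of_mem_support_of_pderiv_eq_zero [NoZeroDivisors R] (q : ℕ) [CharP R q] {i : σ}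
    {p : MvPolynomial σ R} (h : pderiv i p = 0) {α : σ →₀ ℕ} (hα : α ∈ p.support) :
    q ∣ α i := by
  classical
  rcases Nat.eq_zero_or_pos (α i) with hi | hi
  · simp [hi]
  have hα' : α - Finsupp.single i 1 + Finsupp.single i 1 = α :=
    tsub_add_cancel_of_le (Finsupp.single_le_iff.2 hi)
  have hcoeff := coeff_pderiv (i := i) p (α - Finsupp.single i 1)
  rw [h, coeff_zero, hα'] at hcoeff
  have hcast : ((α - Finsupp.single i 1 : σ →₀ ℕ) i : R) + 1 = (α i : ℕ) := by
    rw [Finsupp.tsub_apply, Finsupp.single_eq_same, ← Nat.cast_add_one, Nat.sub_add_cancel hi]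
  rw [hcast, eq_comm, mul_eq_zero] at hcoeff
  exact (CharP.cast_eq_zero_iff R q _).1 (hcoeff.resolve_left (mem_support_iff.1 hα))

theorem totalDegree_eq_zero_of_pderiv_eq_zero [NoZeroDivisors R] [CharZero R]
    {p : MvPolynomial σ R} (h : ∀ i, pderiv i p = 0) : p.totalDegree = 0 :=
  (totalDegree_eq_zero_iff σ p).2 fun _ hα i =>
    Nat.eq_zero_of_zero_dvd (dvd_of_mem_support_of_pderiv_eq_zero 0 (h i) hα)

theorem exists_pow_char_eq_of_pderiv_eq_zero [NoZeroDivisors R] (q : ℕ) [CharP R q] [ExpChar R q]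
    [PerfectRing R q] {p : MvPolynomial σ R} (h : ∀ i, pderiv i p = 0) :
    ∃ g : MvPolynomial σ R, g ^ q = p ∧ g.totalDegree * q ≤ p.totalDegree := by
  obtain ⟨g, rfl⟩ := exists_expand_eq_of_dvd fun α hα i =>
    dvd_of_mem_support_of_pderiv_eq_zero q (h i) hα
  refine ⟨map (frobeniusEquiv R q).symm g, ?_, ?_⟩
  · rw [← map_frobenius_expand, map_expand, map_map, frobenius_comp_frobeniusEquiv_symm, map_id]
  · rw [totalDegree_expand]
    gcongr
    exact totalDegree_le_of_support_subset (support_map_subset _ _)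

end CommRing

section Field

variable [Field R] [Fintype σ]

theorem pow_le_finrank_restrictTotalDegree (m : ℕ) :
    (m + 1) ^ Fintype.card σ ≤ Module.finrank R (restrictTotalDegree σ R (Fintype.card σ * m)) := by
  classical
  let e : (σ → Fin (m + 1)) → σ →₀ ℕ := fun α => Finsupp.equivFunOnFinite.symm (Fin.val ∘ α)
  have he : Function.Injective e :=
    Finsupp.equivFunOnFinite.symm.injective.comp Fin.val_injective.comp_left
  have hli := (basisMonomials σ R).linearIndependent.comp e he
  have hle : Submodule.span R (Set.range (basisMonomials σ R ∘ e)) ≤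
      restrictTotalDegree σ R (Fintype.card σ * m) := by
    rw [Submodule.span_le]
    rintro _ ⟨α, rfl⟩
    rw [SetLike.mem_coe, mem_restrictTotalDegree, Function.comp_apply, coe_basisMonomials]
    refine (totalDegree_monomial_le _ _).trans ?_
    rw [Finsupp.sum_fintype _ _ fun _ => rfl]
    simpa [e] using Finset.sum_le_sum fun i (_ : i ∈ Finset.univ) => Nat.lt_succ_iff.1 (α i).isLt
  calc (m + 1) ^ Fintype.card σ = Fintype.card (σ → Fin (m + 1)) := by simp
    _ = _ := (finrank_span_eq_card hli).symm
    _ ≤ _ := Submodule.finrank_mono hle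

theorem exists_totalDegree_le_forall_eval_eq_zero {S : Set (σ → R)} (hS : S.Finite) {m : ℕ}
    (hm : S.ncard < (m + 1) ^ Fintype.card σ) :
    ∃ p : MvPolynomial σ R, p ≠ 0 ∧ p.totalDegree ≤ Fintype.card σ * m ∧
      ∀ x ∈ S, eval x p = 0 := by
  have := hS.fintype
  let ev : restrictTotalDegree σ R (Fintype.card σ * m) →ₗ[R] S → R :=
    LinearMap.pi (fun x : S => (aeval (x : σ → R)).toLinearMap) ∘ₗ Submodule.subtype _
  have hev : ¬ Function.Injective ev := fun hinj => by
    have := (pow_le_finrank_restrictTotalDegree (R := R) m).trans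
      (LinearMap.finrank_le_finrank_of_injective hinj)
    rw [Module.finrank_pi, ← Nat.card_eq_fintype_card (α := S), Nat.card_coe_set_eq] at this
    omega
  obtain ⟨⟨p, hp⟩, hevp, hp0⟩ := (Submodule.ne_bot_iff _).1 (mt LinearMap.ker_eq_bot.1 hev)
  refine ⟨p, by simpa using hp0, (mem_restrictTotalDegree _ _ _).1 hp, fun x hx => ?_⟩
  simpa [ev] using congr_fun hevp ⟨x, hx⟩

end Field

end MvPolynomial

open MvPolynomial

section Lines

variable {F : Type*} [Field F] {n : ℕ}

theorem exists_eq_add_smul_of_isDirection {b : Fin n → F} {l : Set (Fin n → F)}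
    (hb : IsDirection F b l) {x y : Fin n → F} (hx : x ∈ l) (hy : y ∈ l) :
    ∃ t : F, y = x + t • b := by
  obtain ⟨-, v, rfl⟩ := hb
  obtain ⟨s, rfl⟩ := hx
  obtain ⟨t, rfl⟩ := hy
  exact ⟨t - s, by module⟩

theorem IsLine.eq_of_mem {l : Set (Fin n → F)} (hl : IsLine F l) {x y : Fin n → F}
    (hx : x ∈ l) (hy : y ∈ l) (hxy : x ≠ y) : l = {z | ∃ t : F, z = x + t • (y - x)} := by
  obtain ⟨v, b, -, rfl⟩ := hl
  obtain ⟨s, rfl⟩ := hx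
  obtain ⟨u, rfl⟩ := hy
  have hus : u - s ≠ 0 := sub_ne_zero.2 fun h => hxy (by rw [h])
  ext z
  constructor
  · rintro ⟨t, rfl⟩
    refine ⟨(t - s) / (u - s), ?_⟩
    rw [show v + u • b - (v + s • b) = (u - s) • b by module, smul_smul, div_mul_cancel₀ _ hus]
    module
  · rintro ⟨t, rfl⟩
    exact ⟨s + t * (u - s), by module⟩

theorem IsLine.inter_subsingleton {l l' : Set (Fin n → F)} (hl : IsLine F l) (hl' : IsLine F l')
    (hne : l ≠ l') : (l ∩ l').Subsingleton := by
  intro x hx y hy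
  by_contra hxy
  exact hne ((hl.eq_of_mem hx.1 hy.1 hxy).trans (hl'.eq_of_mem hx.2 hy.2 hxy).symm)

theorem finite_of_forall_isJoint (hn : 2 ≤ n) {𝔏 : Finset (Set (Fin n → F))}
    (hlines : ∀ l ∈ 𝔏, IsLine F l) {K : Set (Fin n → F)} (hK : ∀ x ∈ K, IsJoint F ↑𝔏 x) :
    K.Finite := by
  -- every joint lies on two distinct lines of `𝔏`, and two distinct lines meet at most once
  refine Set.Finite.subset (𝔏.finite_toSet.biUnion fun l hl =>
    (𝔏.filter (· ≠ l)).finite_toSet.biUnion fun l' hl' =>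
      ((hlines l hl).inter_subsingleton (hlines l' (Finset.mem_filter.1 hl').1)
        (Finset.mem_filter.1 hl').2.symm).finite) fun x hx => ?_
  obtain ⟨L, hL, hL𝔏, hxL, -⟩ := hK x hx
  have h01 : L ⟨0, by omega⟩ ≠ L ⟨1, by omega⟩ := hL.ne (by simp)
  simp only [Set.mem_iUnion]
  exact ⟨_, hL𝔏 _, _, Finset.mem_coe.2 (Finset.mem_filter.2 ⟨hL𝔏 _, h01.symm⟩), hxL _, hxL _⟩

end Lines

section PolynomialMethod

variable {E : Type*} [Field E] {n : ℕ}

def lineThrough (x b : Fin n → E) : Set (Fin n → E) :=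
  Set.range fun t : E => x + t • b

def IsRichJoint (S : Set (Fin n → E)) (D : ℕ) (x : Fin n → E) : Prop :=
  ∃ b : Fin n → Fin n → E, Submodule.span E (Set.range b) = ⊤ ∧
    ∀ i, b i ≠ 0 ∧ D < (S ∩ lineThrough x (b i)).ncard

theorem eq_zero_of_forall_dotProduct_eq_zero {b : Fin n → Fin n → E}
    (hb : Submodule.span E (Set.range b) = ⊤) {v : Fin n → E} (h : ∀ i, b i ⬝ᵥ v = 0) :
    v = 0 := by
  classical
  have hv : Fintype.linearCombination E v = 0 :=
    LinearMap.ext_on_range hb fun i => by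
      simpa [Fintype.linearCombination_apply, dotProduct, mul_comm] using h i
  funext j
  simpa using LinearMap.congr_fun hv (Pi.single j 1)

theorem dotProduct_pderiv_eq_zero {S : Set (Fin n → E)} {p : MvPolynomial (Fin n) E}
    (hp : ∀ y ∈ S, eval y p = 0) {x b : Fin n → E} (hb : b ≠ 0)
    (hdeg : p.totalDegree < (S ∩ lineThrough x b).ncard) :
    b ⬝ᵥ (fun i => eval x (pderiv i p)) = 0 := by
  let f : E → Fin n → E := fun t => x + t • b
  have hf : f.Injective := (add_right_injective x).comp (smul_left_injective E hb)
  have hcard : (f ⁻¹' S).ncard = (S ∩ lineThrough x b).ncard := by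
    change _ = (S ∩ Set.range f).ncard
    rw [← Set.ncard_preimage_of_injective_subset_range hf Set.inter_subset_right,
      Set.preimage_inter, Set.preimage_range, Set.inter_univ]
  have hfin : (f ⁻¹' S).Finite := Set.finite_of_ncard_pos (by omega)
  have hzero : restrictLine x b p = 0 := by
    refine Polynomial.eq_zero_of_natDegree_lt_card_of_eval_eq_zero' _ hfin.toFinset
      (fun t ht => ?_) ?_
    · rw [eval_restrictLine]
      exact hp _ (hfin.mem_toFinset.1 ht)
    · rw [← Set.ncard_eq_toFinset_card _ hfin, hcard]
      exact (natDegree_restrictLine_le x b p).trans_lt hdeg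
  rw [← eval_zero_derivative_restrictLine, hzero, Polynomial.derivative_zero,
    Polynomial.eval_zero]

theorem IsRichJoint.eval_pderiv_eq_zero {S : Set (Fin n → E)} {D : ℕ} {x : Fin n → E}
    (hx : IsRichJoint S D x) {p : MvPolynomial (Fin n) E} (hp : ∀ y ∈ S, eval y p = 0)
    (hdeg : p.totalDegree ≤ D) (j : Fin n) : eval x (pderiv j p) = 0 := by
  obtain ⟨b, hspan, hb⟩ := hx
  have hgrad : (fun j => eval x (pderiv j p)) = 0 :=
    eq_zero_of_forall_dotProduct_eq_zero hspan fun i =>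
      dotProduct_pderiv_eq_zero hp (hb i).1 (hdeg.trans_lt (hb i).2)
  exact congr_fun hgrad j

theorem not_forall_isRichJoint [PerfectField E] {S : Set (Fin n → E)} (hS : S.Nonempty)
    {D : ℕ} {p : MvPolynomial (Fin n) E} (hp0 : p ≠ 0) (hp : ∀ y ∈ S, eval y p = 0)
    (hdeg : p.totalDegree ≤ D) : ¬ ∀ x ∈ S, IsRichJoint S D x := by
  intro hrich
  induction hd : p.totalDegree using Nat.strong_induction_on generalizing p with
  | _ d ih =>
    subst hd
    have hpderiv : ∀ j, pderiv j p = 0 := fun j => by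
      by_contra hj
      exact ih _ (totalDegree_pderiv_lt hj) hj
        (fun x hx => (hrich x hx).eval_pderiv_eq_zero hp hdeg j)
        ((totalDegree_pderiv_lt hj).le.trans hdeg) rfl
    have hpos : 0 < p.totalDegree := by
      refine Nat.pos_of_ne_zero fun h0 => hp0 ?_
      obtain ⟨x, hx⟩ := hS
      have hpx := hp x hx
      rw [totalDegree_eq_zero_iff_eq_C.1 h0, eval_C] at hpx
      rw [totalDegree_eq_zero_iff_eq_C.1 h0, hpx, C_0]
    obtain ⟨q, hq⟩ := CharP.exists E
    rcases CharP.char_is_prime_or_zero E q with hq | rfl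
    · have := ExpChar.prime (R := E) hq
      obtain ⟨g, rfl, hg⟩ := exists_pow_char_eq_of_pderiv_eq_zero q hpderiv
      have hlt : g.totalDegree < (g ^ q).totalDegree := by nlinarith [hq.two_le]
      exact ih _ hlt (fun h => hp0 (by rw [h, zero_pow hq.ne_zero]))
        (fun x hx => pow_eq_zero_iff hq.ne_zero |>.1 (by simpa using hp x hx))
        (hlt.le.trans hdeg) rfl
    · have := CharP.charP_to_charZero E
      exact hpos.ne' (totalDegree_eq_zero_of_pderiv_eq_zero hpderiv)

end PolynomialMethod

theorem Submodule.span_range_compLeft_algebraMap_eq_top {R A ι η : Type*} [CommSemiring R]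
    [Semiring A] [Algebra R A] [Finite η] {b : ι → η → R}
    (h : Submodule.span R (Set.range b) = ⊤) :
    Submodule.span A (Set.range ((Algebra.linearMap R A).compLeft η ∘ b)) = ⊤ := by
  classical
  rw [eq_top_iff, ← (Pi.basisFun A η).span_eq, Submodule.span_le]
  rintro _ ⟨j, rfl⟩
  have hj : (Algebra.linearMap R A).compLeft η (Pi.single j 1) ∈
      (Submodule.span R (Set.range b)).map ((Algebra.linearMap R A).compLeft η) :=
    Submodule.mem_map_of_mem (h ▸ Submodule.mem_top)
  rw [Submodule.map_span, ← Set.range_comp] at hj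
  have hΦ : (Algebra.linearMap R A).compLeft η (Pi.single j 1) = Pi.basisFun A η j := by
    ext k
    simp [Pi.single_apply]
  exact Submodule.span_le_restrictScalars R A _ (hΦ ▸ hj)

section Joints

variable {F : Type*} [Field F] {n : ℕ}

theorem isRichJoint_image_algebraMap (E : Type*) [Field E] [Algebra F E]
    {𝔏 : Finset (Set (Fin n → F))} {K : Set (Fin n → F)} (hK : K.Finite) {D : ℕ}
    (hrich : ∀ l ∈ 𝔏, D < (K ∩ l).ncard) {x : Fin n → F} (hx : IsJoint F ↑𝔏 x) :
    IsRichJoint ((Algebra.linearMap F E).compLeft (Fin n) '' K) D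
      ((Algebra.linearMap F E).compLeft (Fin n) x) := by
  set Φ := (Algebra.linearMap F E).compLeft (Fin n)
  have hΦ : Function.Injective Φ := (algebraMap F E).injective.comp_left
  obtain ⟨L, -, hL𝔏, hxL, b, hb, hspan⟩ := hx
  refine ⟨Φ ∘ b, Submodule.span_range_compLeft_algebraMap_eq_top hspan, fun i => ⟨?_, ?_⟩⟩
  · exact fun h => (hb i).1 (hΦ (h.trans Φ.map_zero.symm))
  calc D < (K ∩ L i).ncard := hrich _ (hL𝔏 i)
    _ = (Φ '' (K ∩ L i)).ncard := (Set.ncard_image_of_injective _ hΦ).symm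
    _ ≤ _ := Set.ncard_le_ncard ?_ ((hK.image Φ).inter_of_left _)
  rintro _ ⟨y, ⟨hyK, hyL⟩, rfl⟩
  obtain ⟨t, rfl⟩ := exists_eq_add_smul_of_isDirection (hb i) (hxL i) hyL
  exact ⟨Set.mem_image_of_mem Φ hyK, algebraMap F E t, by
    funext j
    simp [Φ, Algebra.smul_def]⟩

theorem exists_mem_ncard_inter_le {𝔏 : Finset (Set (Fin n → F))} {K : Set (Fin n → F)}
    (hK : K.Finite) (hKne : K.Nonempty) (hjoint : ∀ x ∈ K, IsJoint F ↑𝔏 x) {m : ℕ}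
    (hm : K.ncard < (m + 1) ^ n) : ∃ l ∈ 𝔏, (K ∩ l).ncard ≤ n * m := by
  by_contra! hrich
  set Φ := (Algebra.linearMap F (AlgebraicClosure F)).compLeft (Fin n)
  have hΦ : Function.Injective Φ := (algebraMap F (AlgebraicClosure F)).injective.comp_left
  obtain ⟨p, hp0, hdeg, hp⟩ := exists_totalDegree_le_forall_eval_eq_zero (hK.image Φ) (m := m)
    (by rwa [Fintype.card_fin, Set.ncard_image_of_injective _ hΦ])
  rw [Fintype.card_fin] at hdeg
  refine not_forall_isRichJoint (hKne.image Φ) hp0 hp hdeg ?_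
  rintro _ ⟨x, hxK, rfl⟩
  exact isRichJoint_image_algebraMap _ hK hrich (hjoint x hxK)

theorem exists_partition_ncard_le (𝔏 : Finset (Set (Fin n → F))) {K : Set (Fin n → F)}
    (hK : K.Finite) (hjoint : ∀ x ∈ K, IsJoint F ↑𝔏 x) {m : ℕ} (hm : K.ncard < (m + 1) ^ n) :
    ∃ P : Finset (Set (Fin n → F)), P.card ≤ 𝔏.card ∧ ⋃₀ ↑P = K ∧
      (↑P : Set (Set (Fin n → F))).Pairwise Disjoint ∧ ∀ A ∈ P, A.ncard ≤ n * m := by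
  classical
  induction 𝔏 using Finset.strongInduction generalizing K with
  | H 𝔏 ih =>
    rcases K.eq_empty_or_nonempty with rfl | hKne
    · exact ⟨∅, by simp, by simp, by simp, by simp⟩
    obtain ⟨l, hl, hKl⟩ := exists_mem_ncard_inter_le hK hKne hjoint hm
    have hjoint' : ∀ x ∈ K \ l, IsJoint F ↑(𝔏.erase l) x := by
      rintro x ⟨hxK, hxl⟩
      obtain ⟨L, hL, hL𝔏, hJ⟩ := hjoint x hxK
      exact ⟨L, hL, fun i => Finset.mem_erase.2 ⟨fun h => hxl (h ▸ hJ.1 i), hL𝔏 i⟩, hJ⟩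
    obtain ⟨P, hPcard, hPU, hPD, hPA⟩ := ih _ (Finset.erase_ssubset hl) hK.sdiff hjoint'
      ((Set.ncard_le_ncard Set.sdiff_subset hK).trans_lt hm)
    refine ⟨insert (K ∩ l) P, ?_, ?_, ?_, Finset.forall_mem_insert _ _ _ |>.2 ⟨hKl, hPA⟩⟩
    · rw [Finset.card_erase_of_mem hl] at hPcard
      have := Finset.card_pos.2 ⟨l, hl⟩
      exact (Finset.card_insert_le _ _).trans (by omega)
    · rw [Finset.coe_insert, Set.sUnion_insert, hPU, Set.inter_union_sdiff]
    · rw [Finset.coe_insert]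
      refine hPD.insert fun B hB _ => ?_
      have hdisj : Disjoint (K ∩ l) B := Set.disjoint_of_subset_right
        (hPU ▸ Set.subset_sUnion_of_mem hB) Set.disjoint_sdiff_inter.symm
      exact ⟨hdisj, hdisj.symm⟩

end Joints

theorem Nat.cast_nthRoot_le_rpow {n : ℕ} (hn : n ≠ 0) (a : ℕ) :
    (Nat.nthRoot n a : ℝ) ≤ (a : ℝ) ^ (1 / (n : ℝ)) := by
  calc (Nat.nthRoot n a : ℝ) = ((Nat.nthRoot n a : ℝ) ^ n) ^ (n : ℝ)⁻¹ :=
        (Real.pow_rpow_inv_natCast (Nat.cast_nonneg _) hn).symm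
    _ ≤ (a : ℝ) ^ (1 / (n : ℝ)) := by
        rw [one_div]
        gcongr
        exact_mod_cast Nat.pow_nthRoot_le_iff.2 (Or.inl hn)

/-- For `n ≥ 3` there is a constant `C` depending only on `n` such that for any field
`F`, any finite collection `𝔏` of `L` lines in `F^n` and any subset `K` of the joints
of `𝔏`, the set `K` can be partitioned into at most `L` pairwise disjoint sets, each of
cardinality at most `C·|K|^{1/n}`. -/
theorem stmt10 (n : ℕ) (hn : 3 ≤ n) :
    ∃ C : ℝ, ∀ (F : Type) [Field F] (𝔏 : Finset (Set (Fin n → F))) (K : Set (Fin n → F)),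
      (∀ l ∈ 𝔏, IsLine F l) → (∀ x ∈ K, IsJoint F ↑𝔏 x) →
      ∃ P : Finset (Set (Fin n → F)), P.card ≤ 𝔏.card ∧
        ⋃₀ ↑P = K ∧ (↑P : Set (Set (Fin n → F))).Pairwise Disjoint ∧
        ∀ A ∈ P, (A.ncard : ℝ) ≤ C * (K.ncard : ℝ) ^ (1 / (n : ℝ)) := by
  refine ⟨n, fun F _ 𝔏 K hlines hjoint => ?_⟩
  have hK := finite_of_forall_isJoint (by omega) hlines hjoint
  obtain ⟨P, hPcard, hPU, hPD, hPA⟩ :=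
    exists_partition_ncard_le 𝔏 hK hjoint (Nat.lt_pow_nthRoot_add_one (by omega) K.ncard)
  refine ⟨P, hPcard, hPU, hPD, fun A hA => ?_⟩
  calc (A.ncard : ℝ) ≤ n * Nat.nthRoot n K.ncard := by exact_mod_cast hPA A hA
    _ ≤ n * (K.ncard : ℝ) ^ (1 / (n : ℝ)) := by
        gcongr
        exact Nat.cast_nthRoot_le_rpow (by omega) _
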